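/- Let f : [L, U] → ℝ be a (possibly discontinuous) univariate piecewise linear function with k pieces. Then there exist continuous staircase functions f₁, …, f_m on [L, U] (m ≤ k) and a piecewise constant function f₀ on [L, U] such that f = f₀ + f₁ + ⋯ + f_m. -/

import Mathlib

/-!
Let `f` have breakpoints `h₀ < ⋯ < h_k` and slopes `a₁, …, a_k`. The ramp `f_v` that vanishes
left of `h_{v-1}`, rises with slope `a_v` up to `h_v` and is constant afterwards is a continuous
staircase function with slopes in `{0, a_v}`. On the `i`-th piece only `f_i` changes, so
`f₁ + ⋯ + f_k` has slope `a_i` there, and `f - (f₁ + ⋯ + f_k)` has slope `0` on every piece.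
-/

/-- `f` is piecewise linear on `[L,U]` with `k` pieces, with breakpoints `h`,
slopes `a`, intercepts `d`: `f t = a i * t + d i` on `[h i, h (i+1))`, closed at `U`. -/
def PWLWith (f : ℝ → ℝ) (L U : ℝ) (k : ℕ) (h : Fin (k + 1) → ℝ) (a d : Fin k → ℝ) : Prop :=
  StrictMono h ∧ h 0 = L ∧ h (Fin.last k) = U ∧
    (∀ i : Fin k, ∀ t ∈ Set.Ico (h i.castSucc) (h i.succ), f t = a i * t + d i) ∧
    (∀ i : Fin k, i.succ = Fin.last k → f (h i.succ) = a i * h i.succ + d i)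

/-- `f` is piecewise linear on `[L,U]` with `k` pieces. -/
def IsPWL (f : ℝ → ℝ) (L U : ℝ) (k : ℕ) : Prop :=
  ∃ h a d, PWLWith f L U k h a d

/-- `f` is a staircase function on `[L,U]`: piecewise linear with all slopes in `{0,s}`
for a single `s`. -/
def IsStaircase (f : ℝ → ℝ) (L U : ℝ) : Prop :=
  ∃ (k : ℕ) (h : Fin (k + 1) → ℝ) (a d : Fin k → ℝ) (s : ℝ),
    PWLWith f L U k h a d ∧ ∀ i, a i = 0 ∨ a i = s

/-- `f` is a piecewise constant function on `[L,U]`: piecewise linear with all slopes 0. -/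
def IsPiecewiseConstant (f : ℝ → ℝ) (L U : ℝ) : Prop :=
  ∃ (k : ℕ) (h : Fin (k + 1) → ℝ) (a d : Fin k → ℝ),
    PWLWith f L U k h a d ∧ ∀ i, a i = 0

open Set

def ramp (p q t : ℝ) : ℝ := max (min t q) p - p

lemma continuous_ramp (p q : ℝ) : Continuous (ramp p q) := by
  unfold ramp
  fun_prop

lemma ramp_of_le {p q t : ℝ} (hpq : p ≤ q) (ht : t ≤ p) : ramp p q t = 0 := by
  simp [ramp, min_eq_left (ht.trans hpq), ht]

lemma ramp_of_mem_Icc {p q t : ℝ} (ht : t ∈ Icc p q) : ramp p q t = t - p := by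
  simp [ramp, min_eq_left ht.2, ht.1]

lemma ramp_of_ge {p q t : ℝ} (hpq : p ≤ q) (ht : q ≤ t) : ramp p q t = q - p := by
  simp [ramp, min_eq_right ht, hpq]

section Breakpoints

variable {k : ℕ} {h : Fin (k + 1) → ℝ}

lemma ramp_sub_ramp_of_mem_piece (hh : StrictMono h) (v i : Fin k) {t : ℝ}
    (ht : t ∈ Icc (h i.castSucc) (h i.succ)) :
    ramp (h v.castSucc) (h v.succ) t - ramp (h v.castSucc) (h v.succ) (h i.castSucc) =
      if v = i then t - h i.castSucc else 0 := by
  have hv : h v.castSucc ≤ h v.succ := (hh Fin.castSucc_lt_succ).le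
  rcases lt_trichotomy v i with hvi | rfl | hiv
  · have hqp : h v.succ ≤ h i.castSucc := hh.monotone (Fin.succ_le_castSucc_iff.2 hvi)
    rw [ramp_of_ge hv (hqp.trans ht.1), ramp_of_ge hv hqp, if_neg hvi.ne]
    ring
  · rw [ramp_of_mem_Icc ht, ramp_of_mem_Icc ⟨le_rfl, hv⟩, if_pos rfl]
    ring
  · have hqp : h i.succ ≤ h v.castSucc := hh.monotone (Fin.succ_le_castSucc_iff.2 hiv)
    rw [ramp_of_le hv (ht.2.trans hqp), ramp_of_le hv ((hh Fin.castSucc_lt_succ).le.trans hqp),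
      if_neg hiv.ne']
    ring

variable {f g : ℝ → ℝ} {L U : ℝ} {a b d e : Fin k → ℝ}

lemma pwlWith_of_forall_mem_Icc (hh : StrictMono h) (h0 : h 0 = L)
    (hk : h (Fin.last k) = U)
    (hf : ∀ i, ∀ t ∈ Icc (h i.castSucc) (h i.succ),
      f t - f (h i.castSucc) = a i * (t - h i.castSucc)) :
    PWLWith f L U k h a (fun i => f (h i.castSucc) - a i * h i.castSucc) := by
  have hmem : ∀ i : Fin k, h i.succ ∈ Icc (h i.castSucc) (h i.succ) :=
    fun i => ⟨(hh Fin.castSucc_lt_succ).le, le_rfl⟩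
  refine ⟨hh, h0, hk, fun i t ht => ?_, fun i _ => ?_⟩
  · linarith [hf i t (Ico_subset_Icc_self ht)]
  · linarith [hf i _ (hmem i)]

lemma PWLWith.sub (hf : PWLWith f L U k h a d) (hg : PWLWith g L U k h b e) :
    PWLWith (fun t => f t - g t) L U k h (a - b) (d - e) := by
  obtain ⟨hh, h0, hk, hf_piece, hf_last⟩ := hf
  obtain ⟨-, -, -, hg_piece, hg_last⟩ := hg
  refine ⟨hh, h0, hk, fun i t ht => ?_, fun i hi => ?_⟩
  · simp only [hf_piece i t ht, hg_piece i t ht, Pi.sub_apply]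
    ring
  · simp only [hf_last i hi, hg_last i hi, Pi.sub_apply]
    ring

end Breakpoints

theorem stmt5_general (L U : ℝ) (f : ℝ → ℝ) (k : ℕ) (hf : IsPWL f L U k) :
    ∃ (m : ℕ), m ≤ k ∧ ∃ (f₀ : ℝ → ℝ) (F : Fin m → ℝ → ℝ),
      IsPiecewiseConstant f₀ L U ∧
      (∀ v, ContinuousOn (F v) (Set.Icc L U) ∧ IsStaircase (F v) L U) ∧
      ∀ t ∈ Set.Icc L U, f t = f₀ t + ∑ v, F v t := by
  obtain ⟨h, a, d, hfpwl⟩ := hf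
  have ⟨hh, h0, hk, _⟩ := hfpwl
  set F : Fin k → ℝ → ℝ := fun v t => a v * ramp (h v.castSucc) (h v.succ) t
  have hF_increment : ∀ v i, ∀ t ∈ Icc (h i.castSucc) (h i.succ),
      F v t - F v (h i.castSucc) = (if v = i then a v else 0) * (t - h i.castSucc) := by
    intro v i t ht
    rw [← mul_sub, ramp_sub_ramp_of_mem_piece hh v i ht]
    split_ifs <;> ring
  have hsum : PWLWith (fun t => ∑ v, F v t) L U k h a _ :=
    pwlWith_of_forall_mem_Icc hh h0 hk fun i t ht => by
      rw [← Finset.sum_sub_distrib, Finset.sum_congr rfl fun v _ => hF_increment v i t ht,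
        ← Finset.sum_mul, Finset.sum_ite_eq' Finset.univ i a, if_pos (Finset.mem_univ i)]
  refine ⟨k, le_rfl, fun t => f t - ∑ v, F v t, F,
    ⟨k, h, _, _, hfpwl.sub hsum, fun i => sub_self (a i)⟩, fun v => ⟨?_, ?_⟩, fun t _ => by ring⟩
  · exact (continuous_const.mul (continuous_ramp _ _)).continuousOn
  · refine ⟨k, h, _, _, a v, pwlWith_of_forall_mem_Icc hh h0 hk (hF_increment v), fun i => ?_⟩
    split_ifs <;> simp

/-- a (possibly discontinuous) piecewise linear function with `k` pieces
on `[L,U]` is a sum of at most `k` continuous staircase functions plus one piecewise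
constant function. -/
theorem stmt5 (L U : ℝ) (hLU : L < U) (f : ℝ → ℝ) (k : ℕ) (hf : IsPWL f L U k) :
    ∃ (m : ℕ), m ≤ k ∧ ∃ (f₀ : ℝ → ℝ) (F : Fin m → ℝ → ℝ),
      IsPiecewiseConstant f₀ L U ∧
      (∀ v, ContinuousOn (F v) (Set.Icc L U) ∧ IsStaircase (F v) L U) ∧
      ∀ t ∈ Set.Icc L U, f t = f₀ t + ∑ v, F v t :=
  stmt5_general L U f k hf
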